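/- arXiv:1206.1246 — 2 statements merged into one kernel-verified Lean document; each statement's English description precedes it below -/
import Mathlib

section
/- Let 0 < max{r₀, r₁} ≤ T with r₀ ≠ r₁. Then ∫ from max{r₀,r₁} to T of t / (√(t² − r₀²)·√(t² − r₁²)) dt = ln(√(T² − r₀²) + √(T² − r₁²)) − (1/2)·ln|r₀² − r₁²|. -/
open MeasureTheory Real Set

/-!
On `(r₀, ∞)` with `r₁² < r₀²` the integrand is the derivative of
`t ↦ log (√(t² - r₀²) + √(t² - r₁²))`, which is continuous up to `t = r₀` and equals
`log √(r₀² - r₁²)` there. Since the integrand is nonnegative, this primitive also makes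
the improper integral converge, and the fundamental theorem of calculus gives the identity.
-/

lemma hasDerivAt_sqrt_sq_sub {a t : ℝ} (h : a < t ^ 2) :
    HasDerivAt (fun t : ℝ => √(t ^ 2 - a)) (t / √(t ^ 2 - a)) t := by
  have hsq : HasDerivAt (fun t : ℝ => t ^ 2 - a) (2 * t) t := by
    simpa using (hasDerivAt_pow 2 t).sub_const a
  refine ((hasDerivAt_sqrt (sub_pos.2 h).ne').comp t hsq).congr_deriv ?_
  field_simp

lemma hasDerivAt_log_sqrt_add_sqrt {a b t : ℝ} (ha : a < t ^ 2) (hb : b < t ^ 2) :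
    HasDerivAt (fun t : ℝ => log (√(t ^ 2 - a) + √(t ^ 2 - b)))
      (t / (√(t ^ 2 - a) * √(t ^ 2 - b))) t := by
  have hu : 0 < √(t ^ 2 - a) := sqrt_pos.2 (sub_pos.2 ha)
  have hv : 0 < √(t ^ 2 - b) := sqrt_pos.2 (sub_pos.2 hb)
  have hsum : HasDerivAt (fun t : ℝ => √(t ^ 2 - a) + √(t ^ 2 - b))
      (t / √(t ^ 2 - a) + t / √(t ^ 2 - b)) t :=
    (hasDerivAt_sqrt_sq_sub ha).add (hasDerivAt_sqrt_sq_sub hb)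
  refine (hsum.log (by positivity)).congr_deriv ?_
  field_simp
  ring

theorem integral_div_sqrt_mul_sqrt {r₀ r₁ T : ℝ} (h₀ : 0 ≤ r₀) (hlt : r₁ ^ 2 < r₀ ^ 2)
    (hT : r₀ ≤ T) :
    ∫ t in r₀..T, t / (√(t ^ 2 - r₀ ^ 2) * √(t ^ 2 - r₁ ^ 2)) =
      log (√(T ^ 2 - r₀ ^ 2) + √(T ^ 2 - r₁ ^ 2)) - (1 / 2) * log (r₀ ^ 2 - r₁ ^ 2) := by
  have hsq_lt {t : ℝ} (ht : r₀ < t) : r₀ ^ 2 < t ^ 2 := by nlinarith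
  have hderiv : ∀ t ∈ Ioo r₀ T,
      HasDerivAt (fun t => log (√(t ^ 2 - r₀ ^ 2) + √(t ^ 2 - r₁ ^ 2)))
        (t / (√(t ^ 2 - r₀ ^ 2) * √(t ^ 2 - r₁ ^ 2))) t := fun t ht =>
    hasDerivAt_log_sqrt_add_sqrt (hsq_lt ht.1) (hlt.trans (hsq_lt ht.1))
  have hcont :
      ContinuousOn (fun t => log (√(t ^ 2 - r₀ ^ 2) + √(t ^ 2 - r₁ ^ 2))) (Icc r₀ T) := by
    refine ContinuousOn.log (by fun_prop) fun t ht => ?_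
    have : 0 < √(t ^ 2 - r₁ ^ 2) := sqrt_pos.2 (by nlinarith [ht.1])
    positivity
  have hnonneg : ∀ t ∈ Ioo r₀ T, 0 ≤ t / (√(t ^ 2 - r₀ ^ 2) * √(t ^ 2 - r₁ ^ 2)) :=
    fun t ht => div_nonneg (h₀.trans ht.1.le) (by positivity)
  rw [intervalIntegral.integral_eq_sub_of_hasDerivAt_of_le hT hcont hderiv
    (intervalIntegral.intervalIntegrable_deriv_of_nonneg (by rwa [uIcc_of_le hT])
      (by simpa [hT] using hderiv) (by simpa [hT] using hnonneg))]
  rw [sub_self, sqrt_zero, zero_add, log_sqrt (sub_pos.2 hlt).le]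
  ring

theorem integral_sqrt_identity_general (r₀ r₁ T : ℝ) (h₀ : 0 ≤ r₀) (h₁ : 0 ≤ r₁)
    (hne : r₀ ≠ r₁) (hT : max r₀ r₁ ≤ T) :
    ∫ t in (max r₀ r₁)..T, t / (Real.sqrt (t ^ 2 - r₀ ^ 2) * Real.sqrt (t ^ 2 - r₁ ^ 2)) =
      Real.log (Real.sqrt (T ^ 2 - r₀ ^ 2) + Real.sqrt (T ^ 2 - r₁ ^ 2)) -
        (1 / 2) * Real.log |r₀ ^ 2 - r₁ ^ 2| := by
  wlog hlt : r₁ < r₀ generalizing r₀ r₁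
  · have := this r₁ r₀ h₁ h₀ hne.symm (max_comm r₀ r₁ ▸ hT)
      (hne.lt_or_gt.resolve_right hlt)
    simpa only [max_comm, mul_comm, add_comm, abs_sub_comm] using this
  rw [max_eq_left hlt.le] at hT ⊢
  rw [abs_of_pos (by nlinarith)]
  exact integral_div_sqrt_mul_sqrt h₀ (by nlinarith) hT

theorem integral_sqrt_identity (r₀ r₁ T : ℝ) (h₀ : 0 ≤ r₀) (h₁ : 0 ≤ r₁)
    (hpos : 0 < max r₀ r₁) (hne : r₀ ≠ r₁) (hT : max r₀ r₁ ≤ T) :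
    ∫ t in (max r₀ r₁)..T, t / (Real.sqrt (t ^ 2 - r₀ ^ 2) * Real.sqrt (t ^ 2 - r₁ ^ 2)) =
      Real.log (Real.sqrt (T ^ 2 - r₀ ^ 2) + Real.sqrt (T ^ 2 - r₁ ^ 2)) -
        (1 / 2) * Real.log |r₀ ^ 2 - r₁ ^ 2| :=
  integral_sqrt_identity_general r₀ r₁ T h₀ h₁ hne hT
end

section
/- Let E = {(x,y) ∈ ℝ² : x² + y²/b² < 1} for some b > 0, and let x₀ ≠ x₁ be points in E. Write n̂(x₁,x₀) = (cos α̂, sin α̂) and â = â(x₁,x₀) = (|x₁|²−|x₀|²)/(2|x₁−x₀|). Then |â| < √(cos² α̂ + b² sin² α̂). -/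
noncomputable section

abbrev E2 := EuclideanSpace ℝ (Fin 2)

private lemma key_ineq (b a0 a1 c0 c1 : ℝ) (hb : 0 < b)
    (hd2 : 0 < (c0 - a0) ^ 2 + (c1 - a1) ^ 2)
    (h₀' : b ^ 2 * a0 ^ 2 + a1 ^ 2 < b ^ 2)
    (h₁' : b ^ 2 * c0 ^ 2 + c1 ^ 2 < b ^ 2) :
    ((c0 ^ 2 + c1 ^ 2) - (a0 ^ 2 + a1 ^ 2)) ^ 2 <
      4 * ((c0 - a0) ^ 2 + b ^ 2 * (c1 - a1) ^ 2) := by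
  have hb2 : (0:ℝ) < b ^ 2 := by positivity
  have hpos : 0 < (c0 - a0) ^ 2 + b ^ 2 * (c1 - a1) ^ 2 := by
    rcases eq_or_ne (c0 - a0) 0 with h | h
    · have h1 : (c1 - a1) ≠ 0 := by
        intro h1; rw [h, h1] at hd2; norm_num at hd2
      have h2 : 0 < (c1 - a1) ^ 2 := by positivity
      nlinarith [sq_nonneg (c0 - a0), mul_pos hb2 h2]
    · have h2 : 0 < (c0 - a0) ^ 2 := by positivity
      nlinarith [mul_nonneg hb2.le (sq_nonneg (c1 - a1))]
  have hgap4 : b ^ 2 * (a0 + c0) ^ 2 + (a1 + c1) ^ 2 < 4 * b ^ 2 := by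
    nlinarith [mul_nonneg hb2.le (sq_nonneg (a0 - c0)), sq_nonneg (a1 - c1)]
  have hprod : 0 < ((c0 - a0) ^ 2 + b ^ 2 * (c1 - a1) ^ 2) *
      (4 * b ^ 2 - (b ^ 2 * (a0 + c0) ^ 2 + (a1 + c1) ^ 2)) :=
    mul_pos hpos (by linarith)
  have cs := sq_nonneg ((c0 - a0) * (a1 + c1) - b ^ 2 * (c1 - a1) * (a0 + c0))
  have id : b ^ 2 * (4 * ((c0 - a0) ^ 2 + b ^ 2 * (c1 - a1) ^ 2)) -
      b ^ 2 * (((c0 ^ 2 + c1 ^ 2) - (a0 ^ 2 + a1 ^ 2)) ^ 2) =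
      ((c0 - a0) * (a1 + c1) - b ^ 2 * (c1 - a1) * (a0 + c0)) ^ 2 +
      ((c0 - a0) ^ 2 + b ^ 2 * (c1 - a1) ^ 2) *
        (4 * b ^ 2 - (b ^ 2 * (a0 + c0) ^ 2 + (a1 + c1) ^ 2)) := by ring
  have keyb : b ^ 2 * (((c0 ^ 2 + c1 ^ 2) - (a0 ^ 2 + a1 ^ 2)) ^ 2) <
      b ^ 2 * (4 * ((c0 - a0) ^ 2 + b ^ 2 * (c1 - a1) ^ 2)) := by linarith
  exact (mul_lt_mul_iff_right₀ hb2).mp keyb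

theorem ahat_lt_scaled_norm_of_mem_ellipse (b : ℝ) (hb : 0 < b) (x₀ x₁ : E2)
    (h₀ : (x₀ 0) ^ 2 + (x₀ 1) ^ 2 / b ^ 2 < 1)
    (h₁ : (x₁ 0) ^ 2 + (x₁ 1) ^ 2 / b ^ 2 < 1)
    (hne : x₀ ≠ x₁) :
    |(‖x₁‖ ^ 2 - ‖x₀‖ ^ 2) / (2 * ‖x₁ - x₀‖)| <
      Real.sqrt ((‖x₁ - x₀‖⁻¹ • (x₁ - x₀) : E2) 0 ^ 2 +
        b ^ 2 * ((‖x₁ - x₀‖⁻¹ • (x₁ - x₀) : E2) 1) ^ 2) := by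
  have hdne : x₁ - x₀ ≠ 0 := sub_ne_zero.mpr (Ne.symm hne)
  have hr : 0 < ‖x₁ - x₀‖ := norm_pos_iff.mpr hdne
  have hb2 : (0:ℝ) < b ^ 2 := by positivity
  obtain ⟨a0, ha0⟩ : ∃ t, x₀ 0 = t := ⟨_, rfl⟩
  obtain ⟨a1, ha1⟩ : ∃ t, x₀ 1 = t := ⟨_, rfl⟩
  obtain ⟨c0, hc0⟩ : ∃ t, x₁ 0 = t := ⟨_, rfl⟩
  obtain ⟨c1, hc1⟩ : ∃ t, x₁ 1 = t := ⟨_, rfl⟩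
  rw [ha0, ha1] at h₀
  rw [hc0, hc1] at h₁
  have hn0 : ‖x₀‖ ^ 2 = a0 ^ 2 + a1 ^ 2 := by
    rw [EuclideanSpace.norm_eq, Real.sq_sqrt (by positivity)]
    simp [Fin.sum_univ_two, sq_abs, ha0, ha1]
  have hn1 : ‖x₁‖ ^ 2 = c0 ^ 2 + c1 ^ 2 := by
    rw [EuclideanSpace.norm_eq, Real.sq_sqrt (by positivity)]
    simp [Fin.sum_univ_two, sq_abs, hc0, hc1]
  have hnd : ‖x₁ - x₀‖ ^ 2 = (c0 - a0) ^ 2 + (c1 - a1) ^ 2 := by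
    rw [EuclideanSpace.norm_eq, Real.sq_sqrt (by positivity)]
    simp [Fin.sum_univ_two, sq_abs, PiLp.sub_apply, ha0, ha1, hc0, hc1]
  have hcomp0 : (‖x₁ - x₀‖⁻¹ • (x₁ - x₀) : E2) 0 = ‖x₁ - x₀‖⁻¹ * (c0 - a0) := by
    simp [PiLp.smul_apply, PiLp.sub_apply, smul_eq_mul, ha0, hc0]
  have hcomp1 : (‖x₁ - x₀‖⁻¹ • (x₁ - x₀) : E2) 1 = ‖x₁ - x₀‖⁻¹ * (c1 - a1) := by
    simp [PiLp.smul_apply, PiLp.sub_apply, smul_eq_mul, ha1, hc1]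
  rw [hcomp0, hcomp1, hn0, hn1]
  rw [Real.lt_sqrt (abs_nonneg _), sq_abs, div_pow]
  have hr2 : (0:ℝ) < ‖x₁ - x₀‖ ^ 2 := by positivity
  have h₀' : b ^ 2 * a0 ^ 2 + a1 ^ 2 < b ^ 2 := by
    have h := mul_lt_mul_of_pos_left h₀ hb2
    rw [mul_one] at h
    calc b ^ 2 * a0 ^ 2 + a1 ^ 2 = b ^ 2 * (a0 ^ 2 + a1 ^ 2 / b ^ 2) := by
          field_simp
      _ < b ^ 2 := h
  have h₁' : b ^ 2 * c0 ^ 2 + c1 ^ 2 < b ^ 2 := by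
    have h := mul_lt_mul_of_pos_left h₁ hb2
    rw [mul_one] at h
    calc b ^ 2 * c0 ^ 2 + c1 ^ 2 = b ^ 2 * (c0 ^ 2 + c1 ^ 2 / b ^ 2) := by
          field_simp
      _ < b ^ 2 := h
  have hd2 : (0:ℝ) < (c0 - a0) ^ 2 + (c1 - a1) ^ 2 := by rw [← hnd]; positivity
  have key := key_ineq b a0 a1 c0 c1 hb hd2 h₀' h₁'
  calc (c0 ^ 2 + c1 ^ 2 - (a0 ^ 2 + a1 ^ 2)) ^ 2 / (2 * ‖x₁ - x₀‖) ^ 2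
      = (c0 ^ 2 + c1 ^ 2 - (a0 ^ 2 + a1 ^ 2)) ^ 2 / (4 * ‖x₁ - x₀‖ ^ 2) := by
        ring_nf
    _ < ((c0 - a0) ^ 2 + b ^ 2 * (c1 - a1) ^ 2) / ‖x₁ - x₀‖ ^ 2 := by
        rw [div_lt_div_iff₀ (by positivity) hr2]; nlinarith [key, hr2]
    _ = (‖x₁ - x₀‖⁻¹ * (c0 - a0)) ^ 2 + b ^ 2 * (‖x₁ - x₀‖⁻¹ * (c1 - a1)) ^ 2 := by
        field_simp
end
end
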